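/- arXiv:1603.09260 — 2 statements merged into one kernel-verified Lean document; each statement's English description precedes it below -/
import Mathlib

section
/- Let f : ℝⁿ → ℝⁿ be continuously differentiable with Lipschitz continuous derivative (so f admits a well-defined second-order Taylor expansion), let y ∈ ℝⁿ be fixed, and let b be an ℝⁿ-valued random vector, independent of y, with i.i.d. coordinates of zero mean, unit variance, and bounded higher moments (in particular E[b] = 0, E[b bᵀ] = Iₙ, and E[‖b‖²] < ∞). Then lim_{ε → 0} E_b[ bᵀ ((f(y + εb) − f(y))/ε) ] = Σ_{i=1}^{n} ∂f_i/∂y_i (y), i.e. the Monte-Carlo perturbation estimator converges to the divergence (trace of the Jacobian) of f at y. -/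
/-!
Write `L = f'(y)`. Since `f'` is `K`-Lipschitz, the mean value inequality gives
`‖f (y + v) - f y - L v‖ ≤ K ‖v‖²`, so the integrand `⟪b, ε⁻¹ (f (y + ε b) - f y)⟫` differs
from `⟪b, L b⟫` by at most `K |ε| ‖b‖³`, whose expectation is `O(ε)` by the third moment bound.
Finally `⟪b, L b⟫ = ∑ᵢⱼ Lᵢⱼ bᵢ bⱼ` and `E[bᵢ bⱼ] = δᵢⱼ` give `E⟪b, L b⟫ = ∑ᵢ Lᵢᵢ`.
-/

open MeasureTheory ProbabilityTheory Filter
open scoped RealInnerProductSpace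

theorem norm_sub_sub_fderiv_le_of_lipschitzWith_fderiv {E F : Type*}
    [NormedAddCommGroup E] [NormedSpace ℝ E] [NormedAddCommGroup F] [NormedSpace ℝ F]
    {f : E → F} {K : NNReal} (hf : Differentiable ℝ f) (hf' : LipschitzWith K (fderiv ℝ f))
    (y v : E) : ‖f (y + v) - f y - fderiv ℝ f y v‖ ≤ K * ‖v‖ ^ 2 := by
  have hbound : ∀ x ∈ Metric.closedBall y ‖v‖, ‖fderiv ℝ f x - fderiv ℝ f y‖ ≤ K * ‖v‖ :=
    fun x hx => by
      rw [← dist_eq_norm]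
      exact (hf'.dist_le_mul x y).trans (by gcongr; exact hx)
  have h := (convex_closedBall y ‖v‖).norm_image_sub_le_of_norm_fderiv_le'
    (fun x _ => hf x) hbound (Metric.mem_closedBall_self (norm_nonneg v))
    (y := y + v) (by simp [dist_eq_norm])
  simpa [sq, mul_assoc] using h

theorem norm_slope_sub_fderiv_le_of_lipschitzWith_fderiv {E F : Type*}
    [NormedAddCommGroup E] [NormedSpace ℝ E] [NormedAddCommGroup F] [NormedSpace ℝ F]
    {f : E → F} {K : NNReal} (hf : Differentiable ℝ f) (hf' : LipschitzWith K (fderiv ℝ f))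
    (y v : E) {ε : ℝ} (hε : ε ≠ 0) :
    ‖ε⁻¹ • (f (y + ε • v) - f y) - fderiv ℝ f y v‖ ≤ K * |ε| * ‖v‖ ^ 2 := by
  have h : ε⁻¹ • (f (y + ε • v) - f y) - fderiv ℝ f y v
      = ε⁻¹ • (f (y + ε • v) - f y - fderiv ℝ f y (ε • v)) := by
    rw [map_smul, smul_sub _ _ (ε • _), smul_smul, inv_mul_cancel₀ hε, one_smul]
  calc ‖ε⁻¹ • (f (y + ε • v) - f y) - fderiv ℝ f y v‖
      ≤ |ε|⁻¹ * (K * ‖ε • v‖ ^ 2) := by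
        rw [h, norm_smul, Real.norm_eq_abs, abs_inv]
        gcongr
        exact norm_sub_sub_fderiv_le_of_lipschitzWith_fderiv hf hf' y _
    _ = K * |ε| * ‖v‖ ^ 2 := by
        rw [norm_smul, Real.norm_eq_abs]
        field_simp

theorem abs_inner_slope_sub_inner_fderiv_le_of_lipschitzWith_fderiv {E : Type*}
    [NormedAddCommGroup E] [InnerProductSpace ℝ E]
    {f : E → E} {K : NNReal} (hf : Differentiable ℝ f) (hf' : LipschitzWith K (fderiv ℝ f))
    (y v : E) {ε : ℝ} (hε : ε ≠ 0) :
    |⟪v, ε⁻¹ • (f (y + ε • v) - f y)⟫ - ⟪v, fderiv ℝ f y v⟫| ≤ K * |ε| * ‖v‖ ^ 3 := by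
  rw [← inner_sub_right]
  calc _ ≤ ‖v‖ * ‖ε⁻¹ • (f (y + ε • v) - f y) - fderiv ℝ f y v‖ := abs_real_inner_le_norm _ _
    _ ≤ ‖v‖ * (K * |ε| * ‖v‖ ^ 2) := by
        gcongr; exact norm_slope_sub_fderiv_le_of_lipschitzWith_fderiv hf hf' y v hε
    _ = K * |ε| * ‖v‖ ^ 3 := by ring

theorem MeasureTheory.MemLp.integrable_inner {α E : Type*} [MeasurableSpace α] {μ : Measure α}
    [NormedAddCommGroup E] [InnerProductSpace ℝ E] {f g : α → E}
    (hf : MemLp f 2 μ) (hg : MemLp g 2 μ) : Integrable (fun x => ⟪f x, g x⟫) μ :=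
  (L2.integrable_inner (𝕜 := ℝ) hf.toLp hg.toLp).congr <| by
    filter_upwards [hf.coeFn_toLp, hg.coeFn_toLp] with x hfx hgx
    rw [hfx, hgx]

theorem tendsto_integral_of_norm_sub_le_mul_abs {Ω E : Type*} [MeasurableSpace Ω]
    {μ : Measure Ω} [NormedAddCommGroup E] [NormedSpace ℝ E]
    {g : ℝ → Ω → E} {G : Ω → E} {h : Ω → ℝ}
    (hg : ∀ ε ≠ 0, AEStronglyMeasurable (g ε) μ) (hG : Integrable G μ) (hh : Integrable h μ)
    (hgG : ∀ ε ≠ 0, ∀ ω, ‖g ε ω - G ω‖ ≤ |ε| * h ω) :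
    Tendsto (fun ε => ∫ ω, g ε ω ∂μ) (nhdsWithin 0 {0}ᶜ) (nhds (∫ ω, G ω ∂μ)) := by
  have hdist : ∀ ε ≠ (0 : ℝ), ‖∫ ω, g ε ω ∂μ - ∫ ω, G ω ∂μ‖ ≤ |ε| * ∫ ω, h ω ∂μ := by
    intro ε hε
    have hsub : Integrable (fun ω => g ε ω - G ω) μ :=
      (hh.const_mul |ε|).mono' ((hg ε hε).sub hG.aestronglyMeasurable) (ae_of_all _ (hgG ε hε))
    have hgε : Integrable (g ε) μ := (hsub.add hG).congr (ae_of_all _ fun ω => sub_add_cancel _ _)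
    rw [← integral_sub hgε hG, ← integral_const_mul]
    exact norm_integral_le_of_norm_le (hh.const_mul _) (ae_of_all _ (hgG ε hε))
  rw [tendsto_iff_norm_sub_tendsto_zero]
  refine squeeze_zero_norm' (a := fun ε => |ε| * ∫ ω, h ω ∂μ)
    (eventually_nhdsWithin_of_forall fun ε hε => ?_) ?_
  · simpa using hdist ε hε
  · simpa using ((continuous_abs.tendsto (0 : ℝ)).mul_const (∫ ω, h ω ∂μ)).mono_left
      nhdsWithin_le_nhds

theorem EuclideanSpace.inner_map_self_eq_sum_sum {ι : Type*} [Fintype ι] [DecidableEq ι]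
    (L : EuclideanSpace ℝ ι →L[ℝ] EuclideanSpace ℝ ι) (x : EuclideanSpace ℝ ι) :
    ⟪x, L x⟫ = ∑ i, ∑ j, L (EuclideanSpace.single j 1) i * (x i * x j) := by
  have hLx : L x = ∑ j, x j • L (EuclideanSpace.single j 1) := by
    conv_lhs => rw [← (EuclideanSpace.basisFun ι ℝ).sum_repr x]
    simp [map_sum]
  simp only [hLx, PiLp.inner_apply, WithLp.ofLp_sum, WithLp.ofLp_smul, Finset.sum_apply,
    Pi.smul_apply, smul_eq_mul, RCLike.inner_apply, conj_trivial, Finset.sum_mul]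
  exact Finset.sum_congr rfl fun i _ => Finset.sum_congr rfl fun j _ => by ring

theorem integral_inner_map_self_eq_sum_apply_single {Ω ι : Type*} [MeasurableSpace Ω]
    {μ : Measure Ω} [Fintype ι] [DecidableEq ι] {b : Ω → EuclideanSpace ℝ ι}
    (hb : MemLp b 2 μ)
    (hcov : ∀ i j, ∫ ω, b ω i * b ω j ∂μ = if i = j then (1 : ℝ) else 0)
    (L : EuclideanSpace ℝ ι →L[ℝ] EuclideanSpace ℝ ι) :
    ∫ ω, ⟪b ω, L (b ω)⟫ ∂μ = ∑ i, L (EuclideanSpace.single i 1) i := by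
  have hcoord i : MemLp (fun ω => b ω i) 2 μ :=
    (EuclideanSpace.proj i : EuclideanSpace ℝ ι →L[ℝ] ℝ).comp_memLp' hb
  have hprod i j : Integrable (fun ω => L (EuclideanSpace.single j 1) i * (b ω i * b ω j)) μ :=
    ((hcoord i).integrable_mul (hcoord j)).const_mul _
  simp_rw [EuclideanSpace.inner_map_self_eq_sum_sum]
  rw [integral_finsetSum _ fun i _ => integrable_finsetSum _ fun j _ => hprod i j]
  simp_rw [integral_finsetSum _ fun j _ => hprod _ j, integral_const_mul, hcov]
  simp

theorem monteCarlo_divergence_estimator_general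
    {Ω : Type*} [MeasurableSpace Ω] (μ : Measure Ω)
    (n : ℕ) (f : EuclideanSpace ℝ (Fin n) → EuclideanSpace ℝ (Fin n))
    (hf : ContDiff ℝ 1 f) (K : NNReal) (hf' : LipschitzWith K (fderiv ℝ f))
    (y : EuclideanSpace ℝ (Fin n))
    (b : Ω → EuclideanSpace ℝ (Fin n)) (hb : Measurable b)
    (hcov : ∀ i j : Fin n, ∫ ω, b ω i * b ω j ∂μ = if i = j then (1 : ℝ) else 0)
    (hmoments : ∀ p : ℕ, Integrable (fun ω => ‖b ω‖ ^ p) μ) :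
    Tendsto
      (fun ε : ℝ =>
        ∫ ω, ∑ i, b ω i * ((f (y + ε • b ω) i - f y i) / ε) ∂μ)
      (nhdsWithin 0 {0}ᶜ)
      (nhds (∑ i, fderiv ℝ f y (EuclideanSpace.single i 1) i)) := by
  have hdiff : Differentiable ℝ f := hf.differentiable one_ne_zero
  have hb2 : MemLp b 2 μ :=
    (memLp_two_iff_integrable_sq_norm hb.aestronglyMeasurable).2 (hmoments 2)
  have hslope ε ω : ∑ i, b ω i * ((f (y + ε • b ω) i - f y i) / ε)
      = ⟪b ω, ε⁻¹ • (f (y + ε • b ω) - f y)⟫ := by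
    simp [PiLp.inner_apply, div_eq_inv_mul, mul_comm]
  simp_rw [hslope, ← integral_inner_map_self_eq_sum_apply_single hb2 hcov]
  refine tendsto_integral_of_norm_sub_le_mul_abs (fun ε _ => ?_)
    (hb2.integrable_inner ((fderiv ℝ f y).comp_memLp' hb2)) ((hmoments 3).const_mul K)
    fun ε hε ω => ?_
  · have : Continuous f := hdiff.continuous
    exact (by fun_prop : Continuous fun v => ⟪v, ε⁻¹ • (f (y + ε • v) - f y)⟫)
      |>.comp_aestronglyMeasurable hb.aestronglyMeasurable
  · rw [Real.norm_eq_abs, ← mul_assoc, mul_comm |ε|]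
    exact abs_inner_slope_sub_inner_fderiv_le_of_lipschitzWith_fderiv hdiff hf' y (b ω) hε

/-- Monte-Carlo divergence estimator (Theorem 1 of the paper, after Ramani et al.):
let `f : ℝⁿ → ℝⁿ` be continuously differentiable with Lipschitz derivative (so it
admits a well-defined second-order Taylor expansion), let `y` be fixed, and let `b`
be a random vector with i.i.d. coordinates of zero mean, unit variance and bounded
higher moments (in particular `E[b] = 0`, `E[b bᵀ] = Iₙ`, `E[‖b‖²] < ∞`). Then
`lim_{ε → 0} E_b[ bᵀ ((f(y + εb) − f(y))/ε) ] = Σ_i ∂f_i/∂y_i (y)`, the divergence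
(trace of the Jacobian) of `f` at `y`. -/
theorem monteCarlo_divergence_estimator
    {Ω : Type*} [MeasurableSpace Ω] (μ : Measure Ω) [IsProbabilityMeasure μ]
    (n : ℕ) (f : EuclideanSpace ℝ (Fin n) → EuclideanSpace ℝ (Fin n))
    (hf : ContDiff ℝ 1 f) (K : NNReal) (hf' : LipschitzWith K (fderiv ℝ f))
    (y : EuclideanSpace ℝ (Fin n))
    (b : Ω → EuclideanSpace ℝ (Fin n)) (hb : Measurable b)
    (hindep : iIndepFun (fun i ω => b ω i) μ)
    (hident : ∀ i j : Fin n, IdentDistrib (fun ω => b ω i) (fun ω => b ω j) μ μ)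
    (hmean : ∀ i, ∫ ω, b ω i ∂μ = 0)
    (hcov : ∀ i j : Fin n, ∫ ω, b ω i * b ω j ∂μ = if i = j then (1 : ℝ) else 0)
    (hmoments : ∀ p : ℕ, Integrable (fun ω => ‖b ω‖ ^ p) μ) :
    Tendsto
      (fun ε : ℝ =>
        ∫ ω, ∑ i, b ω i * ((f (y + ε • b ω) i - f y i) / ε) ∂μ)
      (nhdsWithin 0 {0}ᶜ)
      (nhds (∑ i, fderiv ℝ f y (EuclideanSpace.single i 1) i)) :=
  monteCarlo_divergence_estimator_general μ n f hf K hf' y b hb hcov hmoments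
end

section
/- Let L : ℝ^{k−1} → ℝ^{k−1} be differentiable at a point v, with L(v) lying in the interior of the probability simplex (each coordinate positive, coordinates summing to less than 1). Let θ be the natural parameter map θ_c(μ) = ln μ_c − ln(1 − Σ_{l=1}^{k−1} μ_l), let D ∈ ℝ^{(k−1)×(k−1)} be the Jacobian of the composite θ ∘ L at v, i.e. D_{jl} = ∂θ_j(L(·))/∂(·)_l evaluated at v, and let C = C(L(v)) be the categorical covariance matrix with entries C_{jl} = L_j(v) δ_{jl} − L_j(v) L_l(v). Then Σ_{j=1}^{k−1} Σ_{l=1}^{k−1} C_{jl} D_{jl} = Σ_{j=1}^{k−1} ∂L_j/∂v_j (v); i.e. the double sum 2 Σ_{j,l} cov(p_j, p_l) ∂θ_j(L(v))/∂v_l of Equation (2) reduces to 2 Σ_j ∂L_j(v)/∂v_j of Equation (3). -/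
/-!
The Jacobian `Jθ(μ)` of the natural parameter map `θ_j(μ) = log μ_j − log (1 − Σ_c μ_c)` is the
inverse of the categorical covariance matrix `C(μ)`, as always for the mean-to-natural map of an
exponential family. By the chain rule the Jacobian of `θ ∘ L` is `Jθ(L v) * J_L`, so, `C` being
symmetric, `Σ_{j,l} C_{jl} D_{jl} = tr (C * Jθ * J_L) = tr J_L`.
-/

open Matrix Finset

section CategoricalFamily

variable {ι : Type*} [DecidableEq ι]

def categoricalCov (μ : ι → ℝ) : Matrix ι ι ℝ :=
  diagonal μ - vecMulVec μ μ

theorem categoricalCov_apply (μ : ι → ℝ) (j l : ι) :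
    categoricalCov μ j l = (if j = l then μ j else 0) - μ j * μ l := by
  simp [categoricalCov, diagonal_apply, vecMulVec_apply]

theorem categoricalCov_transpose (μ : ι → ℝ) : (categoricalCov μ)ᵀ = categoricalCov μ := by
  simp [categoricalCov, transpose_vecMulVec]

variable [Fintype ι]

theorem sum_categoricalCov_apply (μ : ι → ℝ) (j : ι) :
    ∑ l, categoricalCov μ j l = μ j * (1 - ∑ c, μ c) := by
  simp [categoricalCov_apply, Finset.sum_sub_distrib, ← Finset.mul_sum, mul_sub]

noncomputable def naturalParamJacobian (μ : ι → ℝ) : Matrix ι ι ℝ :=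
  diagonal μ⁻¹ + of fun _ _ => (1 - ∑ c, μ c)⁻¹

theorem categoricalCov_mul_naturalParamJacobian {μ : ι → ℝ} (hμ : ∀ c, μ c ≠ 0)
    (hs : ∑ c, μ c ≠ 1) : categoricalCov μ * naturalParamJacobian μ = 1 := by
  have hs' : 1 - ∑ c, μ c ≠ 0 := sub_ne_zero.mpr hs.symm
  ext j l
  rw [naturalParamJacobian, Matrix.mul_add, Matrix.add_apply, mul_diagonal, mul_apply]
  simp only [of_apply, ← Finset.sum_mul, sum_categoricalCov_apply]
  rw [categoricalCov_apply, one_apply, Pi.inv_apply]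
  have hl := hμ l
  split_ifs with hjl
  · subst hjl; field_simp; ring
  · field_simp; ring

theorem naturalParamJacobian_apply (μ : ι → ℝ) (j m : ι) :
    naturalParamJacobian μ j m = (if j = m then (μ j)⁻¹ else 0) + (1 - ∑ c, μ c)⁻¹ := by
  simp [naturalParamJacobian, diagonal_apply]

theorem fderiv_naturalParam_comp_apply {E : Type*} [NormedAddCommGroup E] [NormedSpace ℝ E]
    {f : E → ι → ℝ} {v : E} (hf : DifferentiableAt ℝ f v) {j : ι} (hj : f v j ≠ 0)
    (hs : ∑ c, f v c ≠ 1) (h : E) :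
    fderiv ℝ (fun w => Real.log (f w j) - Real.log (1 - ∑ c, f w c)) v h =
      ∑ m, naturalParamJacobian (f v) j m * fderiv ℝ (fun w => f w m) v h := by
  have hcoord : ∀ c, HasFDerivAt (fun w => f w c) (fderiv ℝ (fun w => f w c) v) v :=
    fun c => (differentiableAt_pi.mp hf c).hasFDerivAt
  have hlog_coord := (hcoord j).log hj
  have hlog_rest := ((hasFDerivAt_const (1 : ℝ) v).fun_sub
    (HasFDerivAt.fun_sum fun c _ => hcoord c)).log (sub_ne_zero.mpr hs.symm)
  rw [(hlog_coord.fun_sub hlog_rest).fderiv]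
  simp [naturalParamJacobian_apply, add_mul, Finset.sum_add_distrib, ← Finset.mul_sum]

end CategoricalFamily

/-- Reduction of the estimated expected optimism: if `L` maps observation vectors to
estimated categorical probabilities, `μ̂ = L(v)` lies in the interior of the
probability simplex, `D` is the Jacobian of the composite `θ ∘ L` at `v` (with `θ`
the natural parameter map `θ_j(μ) = ln μ_j − ln(1 − Σ_c μ_c)`), and
`C_{jl} = L_j(v) δ_{jl} − L_j(v) L_l(v)` is the categorical covariance matrix, then
`Σ_j Σ_l C_{jl} D_{jl} = Σ_j ∂L_j/∂v_j (v)`. -/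
theorem cov_dot_jacobian_naturalParam_comp_eq_divergence
    (k : ℕ) (L : (Fin (k - 1) → ℝ) → (Fin (k - 1) → ℝ)) (v : Fin (k - 1) → ℝ)
    (hL : DifferentiableAt ℝ L v)
    (hpos : ∀ c, 0 < L v c) (hsum : ∑ c, L v c < 1)
    (D C : Matrix (Fin (k - 1)) (Fin (k - 1)) ℝ)
    (hD : ∀ j l, D j l =
      fderiv ℝ (fun w : Fin (k - 1) → ℝ =>
        Real.log (L w j) - Real.log (1 - ∑ c, L w c)) v (Pi.single l 1))
    (hC : ∀ j l, C j l = (if j = l then L v j else 0) - L v j * L v l) :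
    ∑ j, ∑ l, C j l * D j l
      = ∑ j, fderiv ℝ (fun w : Fin (k - 1) → ℝ => L w j) v (Pi.single j 1) := by
  set J : Matrix (Fin (k - 1)) (Fin (k - 1)) ℝ :=
    of fun j l => fderiv ℝ (fun w => L w j) v (Pi.single l 1)
  have hμ : ∀ c, L v c ≠ 0 := fun c => (hpos c).ne'
  have hC' : C = categoricalCov (L v) := by
    ext j l
    rw [hC, categoricalCov_apply]
  have hD' : D = naturalParamJacobian (L v) * J := by
    ext j l
    rw [hD, fderiv_naturalParam_comp_apply hL (hμ j) hsum.ne]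
    rfl
  calc ∑ j, ∑ l, C j l * D j l = trace (Cᵀ * D) := Finset.sum_comm
    _ = trace J := by
      rw [hC', categoricalCov_transpose, hD', ← Matrix.mul_assoc,
        categoricalCov_mul_naturalParamJacobian hμ hsum.ne, Matrix.one_mul]
end
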